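/- arXiv:1812.02359 — 9 statements merged into one kernel-verified Lean document; each statement's English description precedes it below -/
import Mathlib

section
/- Let z1, z2, z3 be three complex numbers that are not collinear, and let R > 0. Then there exists a constant c > 0, depending only on z1, z2, z3 and R, such that for every eps > 0 and all complex numbers z and z_eps with |z| <= R, |z_eps| <= R, and | |z_eps - zj| - |z - zj| | <= eps for j = 1, 2, 3, one has |z_eps - z| <= c * eps. -/
/-!
Squaring turns the distance constraints into linear ones:
`‖y - q‖² - ‖x - q‖² = ‖y‖² - ‖x‖² - 2⟪q, y - x⟫`, and the a priori bound `R` controls the factor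
`‖y - q‖ + ‖x - q‖` lost in squaring. Subtracting the constraint at `p₀` from the one at `p i`
therefore bounds `⟪p i - p₀, y - x⟫` by `O(ε)`. When the `p i - p₀` span the space,
`w ↦ (⟪p i - p₀, w⟫)ᵢ` is an injective linear map on a finite-dimensional space, hence bounded
below, which bounds `‖y - x‖`.
-/

open Submodule RealInnerProductSpace

theorem abs_norm_sub_sq_sub_norm_sub_sq_le {E : Type*} [SeminormedAddCommGroup E] {x y q : E}
    {R ε : ℝ} (hx : ‖x‖ ≤ R) (hy : ‖y‖ ≤ R) (h : |‖y - q‖ - ‖x - q‖| ≤ ε) :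
    |‖y - q‖ ^ 2 - ‖x - q‖ ^ 2| ≤ 2 * (R + ‖q‖) * ε := by
  have hy' : ‖y - q‖ ≤ R + ‖q‖ := (norm_sub_le y q).trans (by linarith)
  have hx' : ‖x - q‖ ≤ R + ‖q‖ := (norm_sub_le x q).trans (by linarith)
  calc |‖y - q‖ ^ 2 - ‖x - q‖ ^ 2|
      = |‖y - q‖ - ‖x - q‖| * (‖y - q‖ + ‖x - q‖) := by
        rw [sq_sub_sq, abs_mul, abs_of_nonneg (by positivity : 0 ≤ ‖y - q‖ + ‖x - q‖), mul_comm]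
    _ ≤ ε * (2 * (R + ‖q‖)) := by
        gcongr
        · exact (abs_nonneg _).trans h
        · linarith
    _ = 2 * (R + ‖q‖) * ε := by ring

section InnerProductSpace

variable {E : Type*} [NormedAddCommGroup E] [InnerProductSpace ℝ E] {ι : Type*}

theorem norm_sub_sq_sub_norm_sub_sq_sub_eq_inner (x y p q : E) :
    (‖y - p‖ ^ 2 - ‖x - p‖ ^ 2) - (‖y - q‖ ^ 2 - ‖x - q‖ ^ 2) = 2 * ⟪q - p, y - x⟫ := by
  simp only [norm_sub_sq_real, inner_sub_left, inner_sub_right, real_inner_comm p, real_inner_comm q]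
  ring

theorem eq_zero_of_forall_inner_eq_zero_of_span_eq_top {v : ι → E}
    (hv : span ℝ (Set.range v) = ⊤) {w : E} (hw : ∀ i, ⟪v i, w⟫ = 0) : w = 0 := by
  have h : span ℝ (Set.range v) ⟂ span ℝ {w} := by
    rw [isOrtho_span]
    rintro _ ⟨i, rfl⟩ _ rfl
    exact hw i
  rwa [hv, isOrtho_top_left, span_singleton_eq_bot] at h

theorem exists_norm_le_mul_norm_inner_of_span_eq_top [FiniteDimensional ℝ E] [Fintype ι]
    {v : ι → E} (hv : span ℝ (Set.range v) = ⊤) :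
    ∃ C > 0, ∀ w : E, ‖w‖ ≤ C * ‖fun i => ⟪v i, w⟫‖ := by
  let L : E →ₗ[ℝ] ι → ℝ := LinearMap.pi fun i => innerₛₗ ℝ (v i)
  have hL : Function.Injective L := by
    rw [← LinearMap.ker_eq_bot, LinearMap.ker_eq_bot']
    exact fun w hw => eq_zero_of_forall_inner_eq_zero_of_span_eq_top hv (congrFun hw)
  obtain ⟨K, hK, hLK⟩ := L.injective_iff_antilipschitz.mp hL
  refine ⟨K, hK, fun w => ?_⟩
  calc ‖w‖ = dist w 0 := (dist_zero_right w).symm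
    _ ≤ K * dist (L w) (L 0) := hLK.le_mul_dist w 0
    _ = K * ‖fun i => ⟪v i, w⟫‖ := by rw [map_zero, dist_zero_right]; rfl

theorem exists_norm_sub_le_of_abs_norm_sub_sub_norm_sub_le [FiniteDimensional ℝ E] [Fintype ι]
    (p₀ : E) (p : ι → E) (hp : span ℝ (Set.range fun i => p i - p₀) = ⊤) :
    ∃ C > 0, ∀ (R ε : ℝ) (x y : E), ‖x‖ ≤ R → ‖y‖ ≤ R →
      |‖y - p₀‖ - ‖x - p₀‖| ≤ ε → (∀ i, |‖y - p i‖ - ‖x - p i‖| ≤ ε) →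
      ‖y - x‖ ≤ C * (2 * R + ‖p₀‖ + ‖p‖) * ε := by
  obtain ⟨C, hC, hCbound⟩ := exists_norm_le_mul_norm_inner_of_span_eq_top hp
  refine ⟨C, hC, fun R ε x y hx hy h₀ h => ?_⟩
  have hR : 0 ≤ R := (norm_nonneg x).trans hx
  have hε : 0 ≤ ε := (abs_nonneg _).trans h₀
  have hinner : ‖fun i => ⟪p i - p₀, y - x⟫‖ ≤ (2 * R + ‖p₀‖ + ‖p‖) * ε := by
    rw [pi_norm_le_iff_of_nonneg (by positivity)]
    intro i
    have hp₀ := abs_norm_sub_sq_sub_norm_sub_sq_le hx hy h₀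
    have hpi : |‖y - p i‖ ^ 2 - ‖x - p i‖ ^ 2| ≤ 2 * (R + ‖p‖) * ε :=
      (abs_norm_sub_sq_sub_norm_sub_sq_le hx hy (h i)).trans (by gcongr; exact norm_le_pi_norm p i)
    have hid := norm_sub_sq_sub_norm_sub_sq_sub_eq_inner x y p₀ (p i)
    rw [Real.norm_eq_abs, abs_le]
    rw [abs_le] at hp₀ hpi
    constructor <;> linarith
  calc ‖y - x‖ ≤ C * ‖fun i => ⟪p i - p₀, y - x⟫‖ := hCbound _
    _ ≤ C * ((2 * R + ‖p₀‖ + ‖p‖) * ε) := by gcongr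
    _ = C * (2 * R + ‖p₀‖ + ‖p‖) * ε := by ring

end InnerProductSpace

/-- Stability part of the phase retrieval lemma: a point in the complex plane
(bounded a priori by `R`) depends stably on its three distances to three
non-collinear points. -/
theorem stmt_1 (z1 z2 z3 : ℂ)
    (hcol : LinearIndependent ℝ ![z2 - z1, z3 - z1])
    (R : ℝ) (hR : 0 < R) :
    ∃ c : ℝ, 0 < c ∧ ∀ (eps : ℝ), 0 < eps → ∀ (z zeps : ℂ),
      ‖z‖ ≤ R → ‖zeps‖ ≤ R →
      |‖zeps - z1‖ - ‖z - z1‖| ≤ eps →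
      |‖zeps - z2‖ - ‖z - z2‖| ≤ eps →
      |‖zeps - z3‖ - ‖z - z3‖| ≤ eps →
      ‖zeps - z‖ ≤ c * eps := by
  have hspan : span ℝ (Set.range fun i => ![z2, z3] i - z1) = ⊤ := by
    have hdiff : (fun i => ![z2, z3] i - z1) = ![z2 - z1, z3 - z1] := by
      funext i
      fin_cases i <;> rfl
    rw [hdiff]
    exact hcol.span_eq_top_of_card_eq_finrank (by simp)
  obtain ⟨C, hC, hstable⟩ := exists_norm_sub_le_of_abs_norm_sub_sub_norm_sub_le z1 ![z2, z3] hspan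
  refine ⟨C * (2 * R + ‖z1‖ + ‖![z2, z3]‖), by positivity, fun eps _ z zeps hz hzeps h1 h2 h3 => ?_⟩
  exact hstable R eps z zeps hz hzeps h1 (Fin.forall_fin_two.mpr ⟨h2, h3⟩)
end

section
/- Translation invariance of phaseless far field data for sources: let F : R^2 -> C^2 be integrable with compact support, let h in R^2, and define F_h(y) := F(y + h). Then for every unit vector xhat in R^2 and every k > 0, |u_p[F_h](xhat, k)| = |u_p[F](xhat, k)| and |u_s[F_h](xhat, k)| = |u_s[F](xhat, k)|. -/
open MeasureTheory

/-- Euclidean inner product on `ℝ × ℝ`. -/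
noncomputable def dotR (x y : ℝ × ℝ) : ℝ := x.1 * y.1 + x.2 * y.2

/-- Rotation of a vector anticlockwise by `π/2`: `(a, b)ᵖᵉʳᵖ = (-b, a)`. -/
noncomputable def perp (x : ℝ × ℝ) : ℝ × ℝ := (-x.2, x.1)

/-- Complex-bilinear extension of the Euclidean inner product. -/
noncomputable def dotC (x : ℝ × ℝ) (F : ℂ × ℂ) : ℂ := x.1 * F.1 + x.2 * F.2

/-- Compressional far field pattern of a source `F`. -/
noncomputable def uP (F : ℝ × ℝ → ℂ × ℂ) (x : ℝ × ℝ) (k : ℝ) : ℂ :=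
  ∫ y : ℝ × ℝ, Complex.exp (-Complex.I * (k : ℂ) * (dotR x y : ℂ)) * dotC x (F y)

/-- Shear far field pattern of a source `F`. -/
noncomputable def uS (F : ℝ × ℝ → ℂ × ℂ) (x : ℝ × ℝ) (k : ℝ) : ℂ :=
  ∫ y : ℝ × ℝ, Complex.exp (-Complex.I * (k : ℂ) * (dotR x y : ℂ)) * dotC (perp x) (F y)

/-!
Translating a source by `h` multiplies its Fourier transform, hence both far field
patterns, by the unimodular phase factor `exp (i k (x̂ · h))`, which disappears on taking moduli.
-/

open Complex

section PhaseShift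

variable {G : Type*} [AddGroup G] [MeasurableSpace G] [MeasurableAdd G]
  (μ : Measure G) [μ.IsAddRightInvariant] (φ : G →+ ℝ) (k : ℝ)

theorem integral_exp_mul_comp_add_right (g : G → ℂ) (h : G) :
    ∫ y, exp (-I * k * φ y) * g (y + h) ∂μ =
      exp (I * k * φ h) * ∫ y, exp (-I * k * φ y) * g y ∂μ := by
  have phase_shift (y : G) : exp (-I * k * φ y) =
      exp (I * k * φ h) * exp (-I * k * φ (y + h)) := by
    rw [← Complex.exp_add, map_add]
    push_cast
    ring_nf
  calc ∫ y, exp (-I * k * φ y) * g (y + h) ∂μ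
      = ∫ y, exp (I * k * φ h) * (exp (-I * k * φ (y + h)) * g (y + h)) ∂μ := by
        congr 1 with y
        rw [phase_shift, mul_assoc]
    _ = exp (I * k * φ h) * ∫ y, exp (-I * k * φ (y + h)) * g (y + h) ∂μ :=
        integral_const_mul _ _
    _ = exp (I * k * φ h) * ∫ y, exp (-I * k * φ y) * g y ∂μ := by
        rw [integral_add_right_eq_self (fun y => exp (-I * k * φ y) * g y) h]

theorem norm_integral_exp_mul_comp_add_right (g : G → ℂ) (h : G) :
    ‖∫ y, exp (-I * k * φ y) * g (y + h) ∂μ‖ = ‖∫ y, exp (-I * k * φ y) * g y ∂μ‖ := by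
  rw [integral_exp_mul_comp_add_right, norm_mul, mul_assoc, ← ofReal_mul,
    norm_exp_I_mul_ofReal, one_mul]

end PhaseShift

noncomputable def dotRHom (x : ℝ × ℝ) : ℝ × ℝ →+ ℝ where
  toFun := dotR x
  map_zero' := by simp [dotR]
  map_add' y z := by simp only [dotR, Prod.fst_add, Prod.snd_add]; ring

theorem stmt_4_general (F : ℝ × ℝ → ℂ × ℂ) (h : ℝ × ℝ) (xhat : ℝ × ℝ) (k : ℝ) :
    ‖uP (fun y => F (y + h)) xhat k‖ = ‖uP F xhat k‖ ∧
    ‖uS (fun y => F (y + h)) xhat k‖ = ‖uS F xhat k‖ :=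
  ⟨norm_integral_exp_mul_comp_add_right volume (dotRHom xhat) k (fun y => dotC xhat (F y)) h,
    norm_integral_exp_mul_comp_add_right volume (dotRHom xhat) k
      (fun y => dotC (perp xhat) (F y)) h⟩

/-- Translation invariance of the phaseless far field data for sources: the
moduli of both the compressional and shear far field patterns are invariant
under translation of the source. -/
theorem stmt_4 (F : ℝ × ℝ → ℂ × ℂ) (hF : Integrable F) (hsupp : HasCompactSupport F)
    (h : ℝ × ℝ) (xhat : ℝ × ℝ) (hx : xhat.1 ^ 2 + xhat.2 ^ 2 = 1) (k : ℝ) (hk : 0 < k) :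
    ‖uP (fun y => F (y + h)) xhat k‖ = ‖uP F xhat k‖ ∧
    ‖uS (fun y => F (y + h)) xhat k‖ = ‖uS F xhat k‖ :=
  stmt_4_general F h xhat k
end

section
/- Let F1, F2 : R^2 -> C^2 be continuously differentiable with compact support, let xhat be a unit vector in R^2, and let k > 0. If u_p[F1](xhat, k) equals the complex conjugate of u_p[F2](xhat, k), then integral over R^2 of exp(-i k (xhat . y)) div F1(y) dy = - integral over R^2 of exp(-i k (xhat . y)) conj((div F2)(-y)) dy. -/
open MeasureTheory

/-- Divergence of a vector field `F = (F₁, F₂) : ℝ × ℝ → ℂ × ℂ`. -/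
noncomputable def divF (F : ℝ × ℝ → ℂ × ℂ) (y : ℝ × ℝ) : ℂ :=
  fderiv ℝ (fun z => (F z).1) y (1, 0) + fderiv ℝ (fun z => (F z).2) y (0, 1)

/-! Integrating by parts against the plane wave `e(y) = exp(-i k x̂⋅y)`, whose gradient is
`-i k x̂ e`, gives `∫ e div F = i k u_p[F]` for every compactly supported `C¹` field `F`.
The reflected conjugate `G(y) = conj F₂(-y)` has `u_p[G] = conj u_p[F₂]` (substitute `y ↦ -y`)
and `div G(y) = -conj (div F₂)(-y)`, so the identity applied to `F₁` and to `G` gives the claim. -/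

section PlaneWave

variable {E : Type*} [NormedAddCommGroup E] [NormedSpace ℝ E] [MeasurableSpace E]

theorem integrable_cexp_mul [OpensMeasurableSpace E] {μ : Measure E} [IsFiniteMeasureOnCompacts μ]
    (L : E →L[ℝ] ℂ) {g : E → ℂ} (hg : Continuous g) (hgs : HasCompactSupport g) :
    Integrable (fun y => Complex.exp (L y) * g y) μ :=
  ((Complex.continuous_exp.comp L.continuous).mul hg).integrable_of_hasCompactSupport hgs.mul_left

theorem integrable_cexp_mul_fderiv [OpensMeasurableSpace E] {μ : Measure E}
    [IsFiniteMeasureOnCompacts μ] (L : E →L[ℝ] ℂ) {g : E → ℂ} (hg : ContDiff ℝ 1 g)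
    (hgs : HasCompactSupport g) (v : E) :
    Integrable (fun y => Complex.exp (L y) * fderiv ℝ g y v) μ :=
  integrable_cexp_mul L ((hg.continuous_fderiv one_ne_zero).clm_apply continuous_const)
    (hgs.fderiv_apply ℝ v)

theorem integral_cexp_mul_fderiv [FiniteDimensional ℝ E] [BorelSpace E] {μ : Measure E}
    [μ.IsAddHaarMeasure] (L : E →L[ℝ] ℂ) {g : E → ℂ} (hg : ContDiff ℝ 1 g)
    (hgs : HasCompactSupport g) (v : E) :
    ∫ y, Complex.exp (L y) * fderiv ℝ g y v ∂μ = -(L v * ∫ y, Complex.exp (L y) * g y ∂μ) := by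
  have hexp : ∀ y, HasFDerivAt (fun z => Complex.exp (L z)) (Complex.exp (L y) • L) y :=
    fun y => L.hasFDerivAt.cexp
  have hderiv : ∀ y, fderiv ℝ (fun z => Complex.exp (L z)) y v * g y
      = L v * (Complex.exp (L y) * g y) := by
    intro y
    rw [(hexp y).fderiv, smul_apply, smul_eq_mul]
    ring
  have hint : Integrable (fun y => Complex.exp (L y) * g y) μ :=
    integrable_cexp_mul L hg.continuous hgs
  rw [integral_mul_fderiv_eq_neg_fderiv_mul_of_integrable
    (by simpa only [hderiv] using hint.const_mul (L v)) (integrable_cexp_mul_fderiv L hg hgs v)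
    hint (fun y _ => (hexp y).differentiableAt) (fun y _ => hg.differentiable one_ne_zero y)]
  simp only [hderiv, integral_const_mul]

end PlaneWave

theorem integral_cexp_mul_divF (L : (ℝ × ℝ) →L[ℝ] ℂ) {μ : Measure (ℝ × ℝ)}
    [μ.IsAddHaarMeasure] {F : ℝ × ℝ → ℂ × ℂ} (hF : ContDiff ℝ 1 F) (hs : HasCompactSupport F) :
    ∫ y, Complex.exp (L y) * divF F y ∂μ
      = -∫ y, Complex.exp (L y) * (L (1, 0) * (F y).1 + L (0, 1) * (F y).2) ∂μ := by
  have hF₁ : ContDiff ℝ 1 fun z => (F z).1 := contDiff_fst.comp hF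
  have hF₂ : ContDiff ℝ 1 fun z => (F z).2 := contDiff_snd.comp hF
  have hs₁ : HasCompactSupport fun z => (F z).1 := hs.comp_left (g := Prod.fst) rfl
  have hs₂ : HasCompactSupport fun z => (F z).2 := hs.comp_left (g := Prod.snd) rfl
  simp only [divF, mul_add, mul_left_comm (Complex.exp _)]
  rw [integral_add (integrable_cexp_mul_fderiv L hF₁ hs₁ _)
      (integrable_cexp_mul_fderiv L hF₂ hs₂ _),
    integral_add ((integrable_cexp_mul L hF₁.continuous hs₁).const_mul _)
      ((integrable_cexp_mul L hF₂.continuous hs₂).const_mul _),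
    integral_cexp_mul_fderiv L hF₁ hs₁, integral_cexp_mul_fderiv L hF₂ hs₂,
    integral_const_mul, integral_const_mul]
  ring

noncomputable def planeWavePhase (xhat : ℝ × ℝ) (k : ℝ) : (ℝ × ℝ) →L[ℝ] ℂ :=
  (-Complex.I * k) • Complex.ofRealCLM.comp
    (xhat.1 • ContinuousLinearMap.fst ℝ ℝ ℝ + xhat.2 • ContinuousLinearMap.snd ℝ ℝ ℝ)

theorem planeWavePhase_apply (xhat : ℝ × ℝ) (k : ℝ) (y : ℝ × ℝ) :
    planeWavePhase xhat k y = -Complex.I * k * (dotR xhat y : ℂ) := by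
  simp [planeWavePhase, dotR]
  ring

theorem integral_planeWave_mul_divF {F : ℝ × ℝ → ℂ × ℂ} (hF : ContDiff ℝ 1 F)
    (hs : HasCompactSupport F) (xhat : ℝ × ℝ) (k : ℝ) :
    ∫ y, Complex.exp (-Complex.I * k * (dotR xhat y : ℂ)) * divF F y
      = Complex.I * k * uP F xhat k := by
  have hcoeff : ∀ w : ℂ × ℂ,
      planeWavePhase xhat k (1, 0) * w.1 + planeWavePhase xhat k (0, 1) * w.2
        = -Complex.I * k * dotC xhat w := by
    intro w
    simp only [planeWavePhase_apply, dotR, dotC]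
    push_cast
    ring
  simp only [uP, ← planeWavePhase_apply]
  rw [integral_cexp_mul_divF _ hF hs]
  simp only [hcoeff, mul_left_comm (Complex.exp _), integral_const_mul]
  ring

theorem HasCompactSupport.star_comp_neg {X M : Type*} [TopologicalSpace X] [InvolutiveNeg X]
    [ContinuousNeg X] [AddMonoid M] [StarAddMonoid M] {g : X → M} (hg : HasCompactSupport g) :
    HasCompactSupport fun z => star (g (-z)) :=
  (hg.comp_left (g := star) (star_zero _)).comp_homeomorph (Homeomorph.neg X)

section Reflection

variable {E F : Type*} [NormedAddCommGroup E] [NormedSpace ℝ E] [NormedAddCommGroup F]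
  [NormedSpace ℝ F] [StarAddMonoid F] [StarModule ℝ F] [ContinuousStar F] {g : E → F}

theorem ContDiff.star_comp_neg {n : WithTop ℕ∞} (hg : ContDiff ℝ n g) :
    ContDiff ℝ n fun z => star (g (-z)) :=
  (starL' ℝ : F ≃L[ℝ] F).contDiff.comp (hg.comp contDiff_neg)

theorem fderiv_star_comp_neg {y : E} (hg : DifferentiableAt ℝ g (-y)) (v : E) :
    fderiv ℝ (fun z => star (g (-z))) y v = -star (fderiv ℝ g (-y) v) := by
  have hcomp : HasFDerivAt (fun z => g (-z))
      ((fderiv ℝ g (-y)).comp (-ContinuousLinearMap.id ℝ E)) y :=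
    hg.hasFDerivAt.comp y (hasFDerivAt_id y).neg
  rw [hcomp.star.fderiv]
  simp

end Reflection

theorem divF_star_comp_neg {F : ℝ × ℝ → ℂ × ℂ} (hF : Differentiable ℝ F) (y : ℝ × ℝ) :
    divF (fun z => star (F (-z))) y = -starRingEnd ℂ (divF F (-y)) := by
  have h₁ := fderiv_star_comp_neg (hF (-y)).fst (1, 0)
  have h₂ := fderiv_star_comp_neg (hF (-y)).snd (0, 1)
  simp only [divF, Prod.fst_star, Prod.snd_star, map_add, starRingEnd_apply]
  rw [h₁, h₂]
  ring

theorem dotC_star (x : ℝ × ℝ) (w : ℂ × ℂ) : dotC x (star w) = starRingEnd ℂ (dotC x w) := by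
  simp [dotC]

theorem uP_star_comp_neg (F : ℝ × ℝ → ℂ × ℂ) (xhat : ℝ × ℝ) (k : ℝ) :
    uP (fun z => star (F (-z))) xhat k = starRingEnd ℂ (uP F xhat k) := by
  have hintegrand : ∀ y : ℝ × ℝ,
      Complex.exp (-Complex.I * k * (dotR xhat y : ℂ)) * dotC xhat (star (F (-y)))
        = starRingEnd ℂ
            (Complex.exp (-Complex.I * k * (dotR xhat (-y) : ℂ)) * dotC xhat (F (-y))) := by
    intro y
    rw [map_mul, dotC_star, ← Complex.exp_conj]
    congr 2
    simp [dotR]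
    ring
  simp only [uP, hintegrand]
  rw [integral_conj, integral_neg_eq_self
    (fun y => Complex.exp (-Complex.I * k * (dotR xhat y : ℂ)) * dotC xhat (F y))]

theorem stmt_7_general (F1 F2 : ℝ × ℝ → ℂ × ℂ)
    (hF1 : ContDiff ℝ 1 F1) (hs1 : HasCompactSupport F1)
    (hF2 : ContDiff ℝ 1 F2) (hs2 : HasCompactSupport F2)
    (xhat : ℝ × ℝ) (k : ℝ)
    (h : uP F1 xhat k = starRingEnd ℂ (uP F2 xhat k)) :
    ∫ y : ℝ × ℝ, Complex.exp (-Complex.I * (k : ℂ) * (dotR xhat y : ℂ)) * divF F1 y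
      = -∫ y : ℝ × ℝ, Complex.exp (-Complex.I * (k : ℂ) * (dotR xhat y : ℂ)) *
          starRingEnd ℂ (divF F2 (-y)) := by
  calc _ = Complex.I * k * uP F1 xhat k := integral_planeWave_mul_divF hF1 hs1 xhat k
    _ = Complex.I * k * uP (fun z => star (F2 (-z))) xhat k := by rw [h, uP_star_comp_neg]
    _ = _ := by
      rw [← integral_planeWave_mul_divF hF2.star_comp_neg hs2.star_comp_neg xhat k]
      simp only [divF_star_comp_neg (hF2.differentiable one_ne_zero), mul_neg, integral_neg]

/-- The chain of equalities (f1f2) of the paper: if `u_p[F₁](x̂,k)` equals the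
complex conjugate of `u_p[F₂](x̂,k)`, then
`∫ exp(-i k x̂⋅y) div F₁(y) dy = -∫ exp(-i k x̂⋅y) conj((div F₂)(-y)) dy`. -/
theorem stmt_7 (F1 F2 : ℝ × ℝ → ℂ × ℂ)
    (hF1 : ContDiff ℝ 1 F1) (hs1 : HasCompactSupport F1)
    (hF2 : ContDiff ℝ 1 F2) (hs2 : HasCompactSupport F2)
    (xhat : ℝ × ℝ) (hx : xhat.1 ^ 2 + xhat.2 ^ 2 = 1) (k : ℝ) (hk : 0 < k)
    (h : uP F1 xhat k = starRingEnd ℂ (uP F2 xhat k)) :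
    ∫ y : ℝ × ℝ, Complex.exp (-Complex.I * (k : ℂ) * (dotR xhat y : ℂ)) * divF F1 y
      = -∫ y : ℝ × ℝ, Complex.exp (-Complex.I * (k : ℂ) * (dotR xhat y : ℂ)) *
          starRingEnd ℂ (divF F2 (-y)) :=
  stmt_7_general F1 F2 hF1 hs1 hF2 hs2 xhat k h
end

section
/- Let I be a nonempty open interval of real numbers and let f, g : I -> R be real-analytic functions satisfying cos(f(t)) = cos(g(t)) for all t in I. Then there exists an integer l such that either f(t) - g(t) = 2 pi l for all t in I, or f(t) + g(t) = 2 pi l for all t in I. -/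
/-!
Since `cos f - cos g = -2 sin ((f + g) / 2) sin ((f - g) / 2)`, the product of the two analytic
functions `sin ((f ∓ g) / 2)` vanishes on the interval, so by the identity theorem one factor
vanishes identically. Then `f ∓ g` is a continuous function on a connected set with values in the
discrete set `2πℤ`, hence constant.
-/

open Real Set

theorem sin_half_eq_zero_iff_mem_zmultiples {x : ℝ} :
    sin (x / 2) = 0 ↔ x ∈ AddSubgroup.zmultiples (2 * π) := by
  rw [sin_eq_zero_iff, AddSubgroup.mem_zmultiples_iff]
  refine exists_congr fun n ↦ ?_
  rw [zsmul_eq_mul]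
  constructor <;> intro h <;> linarith

theorem IsPreconnected.exists_int_eqOn_of_sin_half_eq_zero {X : Type*} [TopologicalSpace X]
    {U : Set X} (hU : IsPreconnected U) {h : X → ℝ} (hh : ContinuousOn h U)
    (hz : ∀ t ∈ U, sin (h t / 2) = 0) : ∃ l : ℤ, ∀ t ∈ U, h t = 2 * π * l := by
  obtain ⟨y, hy, hhy⟩ := hU.eqOn_const_of_mapsTo
    (isDiscrete_iff_discreteTopology.mpr
      (inferInstanceAs (DiscreteTopology (AddSubgroup.zmultiples (2 * π))))) hh
    (fun t ht ↦ sin_half_eq_zero_iff_mem_zmultiples.mp (hz t ht))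
    ⟨0, (AddSubgroup.zmultiples (2 * π)).zero_mem⟩
  obtain ⟨l, rfl⟩ := AddSubgroup.mem_zmultiples_iff.mp hy
  exact ⟨l, fun t ht ↦ by rw [hhy ht, Function.const_apply, zsmul_eq_mul, mul_comm]⟩

theorem sin_half_sub_mul_sin_half_add_eq_zero {x y : ℝ} (h : cos x = cos y) :
    sin ((x - y) / 2) * sin ((x + y) / 2) = 0 := by
  have := cos_sub_cos x y
  rw [h, sub_self] at this
  linarith

theorem stmt_9_general (a b : ℝ) (f g : ℝ → ℝ)
    (hf : AnalyticOnNhd ℝ f (Set.Ioo a b)) (hg : AnalyticOnNhd ℝ g (Set.Ioo a b))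
    (h : ∀ t ∈ Set.Ioo a b, Real.cos (f t) = Real.cos (g t)) :
    ∃ l : ℤ, (∀ t ∈ Set.Ioo a b, f t - g t = 2 * Real.pi * l) ∨
             (∀ t ∈ Set.Ioo a b, f t + g t = 2 * Real.pi * l) := by
  have hsub : AnalyticOnNhd ℝ (fun t ↦ f t - g t) (Ioo a b) := hf.sub hg
  have hadd : AnalyticOnNhd ℝ (fun t ↦ f t + g t) (Ioo a b) := hf.add hg
  have hsin : ∀ {φ : ℝ → ℝ}, AnalyticOnNhd ℝ φ (Ioo a b) →
      AnalyticOnNhd ℝ (fun t ↦ sin (φ t / 2)) (Ioo a b) :=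
    fun hφ t ht ↦ analyticAt_sin.comp (hφ t ht).div_const
  rcases (hsin hsub).eq_zero_or_eq_zero_of_mul_eq_zero (hsin hadd)
      (fun t ht ↦ sin_half_sub_mul_sin_half_add_eq_zero (h t ht)) isPreconnected_Ioo
    with hz | hz
  · obtain ⟨l, hl⟩ := isPreconnected_Ioo.exists_int_eqOn_of_sin_half_eq_zero hsub.continuousOn hz
    exact ⟨l, Or.inl hl⟩
  · obtain ⟨l, hl⟩ := isPreconnected_Ioo.exists_int_eqOn_of_sin_half_eq_zero hadd.continuousOn hz
    exact ⟨l, Or.inr hl⟩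

/-- Dichotomy for real-analytic phase functions with equal cosines on a
nonempty open interval: either the difference or the sum of the two phases is
identically an integer multiple of `2π`. -/
theorem stmt_9 (a b : ℝ) (hab : a < b) (f g : ℝ → ℝ)
    (hf : AnalyticOnNhd ℝ f (Set.Ioo a b)) (hg : AnalyticOnNhd ℝ g (Set.Ioo a b))
    (h : ∀ t ∈ Set.Ioo a b, Real.cos (f t) = Real.cos (g t)) :
    ∃ l : ℤ, (∀ t ∈ Set.Ioo a b, f t - g t = 2 * Real.pi * l) ∨
             (∀ t ∈ Set.Ioo a b, f t + g t = 2 * Real.pi * l) :=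
  stmt_9_general a b f g hf hg h
end

section
/- Let F1, F2 : R^2 -> C^2 be continuous with compact support and let xhat0 be a unit vector in R^2. Suppose that for every real k, integral over R^2 of exp(-i k (xhat0 . y)) (xhat0 . F1(y)) dy = integral over R^2 of exp(-i k (xhat0 . y)) (xhat0 . F2(y)) dy. Then for every real s, integral over t in R of xhat0 . F1(s xhat0 + t xhat0_perp) dt = integral over t in R of xhat0 . F2(s xhat0 + t xhat0_perp) dt. -/
/-!
For a unit vector `θ`, the substitution `y = s • θ + t • perp θ` is a measure-preserving linear
change of variables in which `dotR θ y = s`. By Fubini, the frequency-`k` datum is therefore the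
one-dimensional Fourier transform, at `k / 2π`, of the Radon profile
`s ↦ ∫ t, f (s • θ + t • perp θ)` (Fourier slice theorem). That profile is continuous with compact
support, so Fourier inversion recovers it from its transform.
-/

open MeasureTheory

open Topology FourierTransform

noncomputable def frame (θ : ℝ × ℝ) : (ℝ × ℝ) →ₗ[ℝ] ℝ × ℝ :=
  Matrix.toLin (Module.Basis.finTwoProd ℝ) (Module.Basis.finTwoProd ℝ) !![θ.1, -θ.2; θ.2, θ.1]

lemma frame_apply (θ p : ℝ × ℝ) : frame θ p = p.1 • θ + p.2 • perp θ := by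
  simp only [frame, Matrix.toLin_finTwoProd_apply, perp, Prod.ext_iff, Prod.fst_add,
    Prod.snd_add, Prod.smul_fst, Prod.smul_snd, smul_eq_mul]
  constructor <;> ring

lemma det_frame (θ : ℝ × ℝ) : LinearMap.det (frame θ) = θ.1 ^ 2 + θ.2 ^ 2 := by
  rw [frame, LinearMap.det_toLin, Matrix.det_fin_two_of]
  ring

section Frame

variable {θ : ℝ × ℝ}

lemma dotR_frame (hθ : θ.1 ^ 2 + θ.2 ^ 2 = 1) (p : ℝ × ℝ) : dotR θ (frame θ p) = p.1 := by
  simp only [frame_apply, dotR, perp, Prod.fst_add, Prod.snd_add, Prod.smul_fst, Prod.smul_snd,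
    smul_eq_mul]
  linear_combination p.1 * hθ

lemma isClosedEmbedding_frame (hθ : θ.1 ^ 2 + θ.2 ^ 2 = 1) : IsClosedEmbedding (frame θ) := by
  refine (frame θ).isClosedEmbedding_of_injective ?_
  have : IsUnit (frame θ) := by
    rw [LinearMap.isUnit_iff_isUnit_det, det_frame, hθ]; exact isUnit_one
  exact LinearMap.ker_eq_bot.mpr (Module.End.isUnit_iff _ |>.mp this).injective

lemma measurePreserving_frame (hθ : θ.1 ^ 2 + θ.2 ^ 2 = 1) : MeasurePreserving (frame θ) := by
  refine ⟨(frame θ).continuous_of_finiteDimensional.measurable, ?_⟩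
  have hdet : LinearMap.det (frame θ) ≠ 0 := by rw [det_frame, hθ]; exact one_ne_zero
  rw [Measure.map_linearMap_addHaar_eq_smul_addHaar _ hdet, det_frame, hθ]
  simp

end Frame

section Slices

variable {E : Type*} [NormedAddCommGroup E] {ψ : ℝ × ℝ → E}

lemma HasCompactSupport.continuous_integral_slice [NormedSpace ℝ E] (hs : HasCompactSupport ψ)
    (hc : Continuous ψ) : Continuous fun s => ∫ t, ψ (s, t) := by
  have hrestrict (s : ℝ) : ∫ t in Prod.snd '' tsupport ψ, ψ (s, t) = ∫ t, ψ (s, t) :=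
    setIntegral_eq_integral_of_forall_compl_eq_zero fun t ht =>
      image_eq_zero_of_notMem_tsupport (x := (s, t)) fun h => ht (Set.mem_image_of_mem Prod.snd h)
  simpa only [hrestrict] using continuous_parametric_integral_of_continuous (μ := volume)
    (f := fun s t => ψ (s, t)) hc (hs.image continuous_snd)

lemma HasCompactSupport.integral_slice [NormedSpace ℝ E] (hs : HasCompactSupport ψ) :
    HasCompactSupport fun s => ∫ t, ψ (s, t) := by
  refine .intro (hs.image continuous_fst) fun s hs' => ?_
  have (t : ℝ) : ψ (s, t) = 0 :=
    image_eq_zero_of_notMem_tsupport fun h => hs' (Set.mem_image_of_mem Prod.fst h)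
  simp [this]

end Slices

section Radon

variable {E : Type*} [NormedAddCommGroup E] [NormedSpace ℝ E] {θ : ℝ × ℝ} {f : ℝ × ℝ → E}

noncomputable def radon (f : ℝ × ℝ → E) (θ : ℝ × ℝ) (s : ℝ) : E :=
  ∫ t : ℝ, f (s • θ + t • perp θ)

lemma radon_eq_integral_frame (f : ℝ × ℝ → E) (θ : ℝ × ℝ) :
    radon f θ = fun s => ∫ t, (f ∘ frame θ) (s, t) := by
  funext s
  simp only [radon, Function.comp_apply, frame_apply]

lemma continuous_radon (hθ : θ.1 ^ 2 + θ.2 ^ 2 = 1) (hc : Continuous f)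
    (hs : HasCompactSupport f) : Continuous (radon f θ) := by
  rw [radon_eq_integral_frame]
  exact (hs.comp_isClosedEmbedding (isClosedEmbedding_frame hθ)).continuous_integral_slice
    (hc.comp (frame θ).continuous_of_finiteDimensional)

lemma hasCompactSupport_radon (hθ : θ.1 ^ 2 + θ.2 ^ 2 = 1) (hs : HasCompactSupport f) :
    HasCompactSupport (radon f θ) := by
  rw [radon_eq_integral_frame]
  exact (hs.comp_isClosedEmbedding (isClosedEmbedding_frame hθ)).integral_slice

lemma integrable_radon (hθ : θ.1 ^ 2 + θ.2 ^ 2 = 1) (hc : Continuous f)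
    (hs : HasCompactSupport f) : Integrable (radon f θ) :=
  (continuous_radon hθ hc hs).integrable_of_hasCompactSupport (hasCompactSupport_radon hθ hs)

end Radon

-- Outside the section: the `ℝ`-structure on `E` must be the one induced by `ℂ`, as in `𝓕`.
theorem fourier_radon {E : Type*} [NormedAddCommGroup E] [NormedSpace ℂ E] {θ : ℝ × ℝ}
    {f : ℝ × ℝ → E} (hθ : θ.1 ^ 2 + θ.2 ^ 2 = 1) (hf : Integrable f) (w : ℝ) :
    𝓕 (radon f θ) w =
      ∫ y, Complex.exp (-Complex.I * ↑(2 * Real.pi * w) * ↑(dotR θ y)) • f y := by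
  set g := fun y => Complex.exp (-Complex.I * ↑(2 * Real.pi * w) * ↑(dotR θ y)) • f y
  have hg : Integrable g :=
    hf.bdd_smul 1 (Continuous.aestronglyMeasurable (by unfold dotR; fun_prop))
      (ae_of_all _ fun y => by simp [Complex.norm_exp])
  have hemb := (isClosedEmbedding_frame hθ).measurableEmbedding
  calc 𝓕 (radon f θ) w = ∫ s, ∫ t, (g ∘ frame θ) (s, t) := by
        rw [Real.fourier_real_eq_integral_exp_smul, radon_eq_integral_frame]
        congr 1 with s
        rw [← integral_smul]
        congr 1 with t
        simp only [Function.comp_apply, g, dotR_frame hθ]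
        congr 2
        push_cast
        ring
    _ = ∫ p, (g ∘ frame θ) p :=
        (integral_prod _ <| ((measurePreserving_frame hθ).integrable_comp_emb hemb).mpr hg).symm
    _ = ∫ y, g y := (measurePreserving_frame hθ).integral_comp hemb g

theorem Continuous.eq_of_fourier_eq {V E : Type*} [NormedAddCommGroup V] [InnerProductSpace ℝ V]
    [FiniteDimensional ℝ V] [MeasurableSpace V] [BorelSpace V] [NormedAddCommGroup E]
    [NormedSpace ℂ E] [CompleteSpace E] {g₁ g₂ : V → E} (hc₁ : Continuous g₁)
    (hc₂ : Continuous g₂) (hi₁ : Integrable g₁) (hi₂ : Integrable g₂) (h : 𝓕 g₁ = 𝓕 g₂) :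
    g₁ = g₂ := by
  have hsub : 𝓕 (g₁ - g₂) = 0 := by
    ext w
    simp only [Real.fourier_eq, Pi.sub_apply, smul_sub, Pi.zero_apply]
    rw [integral_sub ((Real.fourierIntegral_convergent_iff w).2 hi₁)
      ((Real.fourierIntegral_convergent_iff w).2 hi₂), ← Real.fourier_eq, ← Real.fourier_eq, h,
      sub_self]
  have hinv := (hc₁.sub hc₂).fourierInv_fourier_eq (hi₁.sub hi₂) (by simp [hsub])
  rw [hsub] at hinv
  rw [← sub_eq_zero, ← hinv]
  ext v
  simp [Real.fourierInv_eq]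

lemma continuous_dotC (x : ℝ × ℝ) : Continuous (dotC x) := by
  unfold dotC; fun_prop

lemma HasCompactSupport.dotC_comp {F : ℝ × ℝ → ℂ × ℂ} (hF : HasCompactSupport F) (x : ℝ × ℝ) :
    HasCompactSupport (dotC x ∘ F) :=
  hF.comp_left (g := dotC x) (by simp [dotC])

/-- Core of the strip-determination theorem: all-frequency compressional far
field data at one fixed observation direction determines the line-integral
profile of the source in that direction. -/
theorem stmt_11 (F1 F2 : ℝ × ℝ → ℂ × ℂ)
    (hc1 : Continuous F1) (hs1 : HasCompactSupport F1)
    (hc2 : Continuous F2) (hs2 : HasCompactSupport F2)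
    (xhat0 : ℝ × ℝ) (hx : xhat0.1 ^ 2 + xhat0.2 ^ 2 = 1)
    (h : ∀ k : ℝ,
      (∫ y : ℝ × ℝ, Complex.exp (-Complex.I * (k : ℂ) * (dotR xhat0 y : ℂ)) *
          dotC xhat0 (F1 y))
        = ∫ y : ℝ × ℝ, Complex.exp (-Complex.I * (k : ℂ) * (dotR xhat0 y : ℂ)) *
            dotC xhat0 (F2 y)) :
    ∀ s : ℝ,
      (∫ t : ℝ, dotC xhat0 (F1 (s • xhat0 + t • perp xhat0)))
        = ∫ t : ℝ, dotC xhat0 (F2 (s • xhat0 + t • perp xhat0)) := by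
  have hc₁ := (continuous_dotC xhat0).comp hc1
  have hc₂ := (continuous_dotC xhat0).comp hc2
  have hs₁ := hs1.dotC_comp xhat0
  have hs₂ := hs2.dotC_comp xhat0
  have hR : radon (dotC xhat0 ∘ F1) xhat0 = radon (dotC xhat0 ∘ F2) xhat0 := by
    refine (continuous_radon hx hc₁ hs₁).eq_of_fourier_eq (continuous_radon hx hc₂ hs₂)
      (integrable_radon hx hc₁ hs₁) (integrable_radon hx hc₂ hs₂) (funext fun w => ?_)
    rw [fourier_radon hx (hc₁.integrable_of_hasCompactSupport hs₁),
      fourier_radon hx (hc₂.integrable_of_hasCompactSupport hs₂)]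
    simpa only [smul_eq_mul, Function.comp_apply] using h (2 * Real.pi * w)
  exact congrFun hR
end

section
/- Let tau1 be a nonzero complex number, k > 0, z0, z1 in R^2, and let xhat be a unit vector in R^2 with k * (xhat . (z0 - z1)) not an integer multiple of pi. If u1, u2 are complex numbers satisfying |u1| = |u2| and |u1 + tau1 exp(-i k (xhat . zj))| = |u2 + tau1 exp(-i k (xhat . zj))| for j = 0, 1, then u1 = u2. -/
open Complex ComplexConjugate RealInnerProductSpace

lemma dotR_sub (x y z : ℝ × ℝ) : dotR x (y - z) = dotR x y - dotR x z := by
  simp only [dotR, Prod.fst_sub, Prod.snd_sub]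
  ring

lemma inner_sub_eq_zero_of_norm_eq_of_norm_add_eq {E : Type*} [NormedAddCommGroup E]
    [InnerProductSpace ℝ E] {u v c : E} (h₀ : ‖u‖ = ‖v‖) (h : ‖u + c‖ = ‖v + c‖) :
    ⟪u - v, c⟫ = 0 := by
  have hsq := congrArg (· ^ 2) h
  simp only [norm_add_sq_real, h₀] at hsq
  rw [inner_sub_left]
  linarith

lemma Complex.eq_zero_of_inner_eq_zero_of_im_conj_mul_ne_zero {w a b : ℂ} (ha : ⟪w, a⟫ = 0)
    (hb : ⟪w, b⟫ = 0) (hab : (conj a * b).im ≠ 0) : w = 0 := by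
  simp only [Complex.inner, mul_re, mul_im, conj_re, conj_im] at ha hb hab
  have hre : w.re * (a.re * b.im - a.im * b.re) = 0 := by
    linear_combination b.im * ha - a.im * hb
  have him : w.im * (a.re * b.im - a.im * b.re) = 0 := by
    linear_combination a.re * hb - b.re * ha
  have hdet : a.re * b.im - a.im * b.re ≠ 0 := by contrapose! hab; linarith
  exact Complex.ext (by simpa [hdet] using hre) (by simpa [hdet] using him)

lemma im_conj_mul_exp_neg (τ : ℂ) (θ₀ θ₁ : ℝ) :
    (conj (τ * exp (-I * θ₀)) * (τ * exp (-I * θ₁))).im = ‖τ‖ ^ 2 * Real.sin (θ₀ - θ₁) := by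
  have hexp : conj (exp (-I * θ₀)) * exp (-I * θ₁) = exp ((θ₀ - θ₁ : ℝ) * I) := by
    rw [← exp_conj, ← exp_add]
    congr 1
    simp only [map_mul, map_neg, conj_I, conj_ofReal]
    push_cast
    ring
  rw [map_mul, mul_mul_mul_comm, mul_comm (conj τ), mul_conj, hexp, im_ofReal_mul,
    exp_ofReal_mul_I_im, normSq_eq_norm_sq]

theorem stmt_13_general (tau1 : ℂ) (htau : tau1 ≠ 0) (k : ℝ)
    (z0 z1 : ℝ × ℝ) (xhat : ℝ × ℝ)
    (hpi : ∀ n : ℤ, k * dotR xhat (z0 - z1) ≠ n * Real.pi)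
    (u1 u2 : ℂ) (h0 : ‖u1‖ = ‖u2‖)
    (ha : ‖u1 + tau1 * Complex.exp (-Complex.I * (k : ℂ) * (dotR xhat z0 : ℂ))‖
        = ‖u2 + tau1 * Complex.exp (-Complex.I * (k : ℂ) * (dotR xhat z0 : ℂ))‖)
    (hb : ‖u1 + tau1 * Complex.exp (-Complex.I * (k : ℂ) * (dotR xhat z1 : ℂ))‖
        = ‖u2 + tau1 * Complex.exp (-Complex.I * (k : ℂ) * (dotR xhat z1 : ℂ))‖) :
    u1 = u2 := by
  have hphase (z : ℝ × ℝ) :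
      -I * (k : ℂ) * (dotR xhat z : ℂ) = -I * ((k * dotR xhat z : ℝ) : ℂ) := by
    push_cast
    ring
  rw [hphase] at ha hb
  have hsin : Real.sin (k * dotR xhat z0 - k * dotR xhat z1) ≠ 0 := by
    rw [← mul_sub, ← dotR_sub, Ne, Real.sin_eq_zero_iff, not_exists]
    exact fun n hn ↦ hpi n hn.symm
  refine sub_eq_zero.mp (eq_zero_of_inner_eq_zero_of_im_conj_mul_ne_zero
    (inner_sub_eq_zero_of_norm_eq_of_norm_add_eq h0 ha)
    (inner_sub_eq_zero_of_norm_eq_of_norm_add_eq h0 hb) ?_)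
  rw [im_conj_mul_exp_neg]
  exact mul_ne_zero (pow_ne_zero 2 (norm_ne_zero_iff.mpr htau)) hsin

/-- Pointwise phase determination from one scattering strength at two source
points: if `k x̂ ⋅ (z₀ - z₁)` is not an integer multiple of `π`, then the
modulus of `u` together with the moduli of the two augmented values
`u + τ₁ exp(-i k x̂⋅zⱼ)` determine `u`. -/
theorem stmt_13 (tau1 : ℂ) (htau : tau1 ≠ 0) (k : ℝ) (hk : 0 < k)
    (z0 z1 : ℝ × ℝ) (xhat : ℝ × ℝ) (hx : xhat.1 ^ 2 + xhat.2 ^ 2 = 1)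
    (hpi : ∀ n : ℤ, k * dotR xhat (z0 - z1) ≠ n * Real.pi)
    (u1 u2 : ℂ) (h0 : ‖u1‖ = ‖u2‖)
    (ha : ‖u1 + tau1 * Complex.exp (-Complex.I * (k : ℂ) * (dotR xhat z0 : ℂ))‖
        = ‖u2 + tau1 * Complex.exp (-Complex.I * (k : ℂ) * (dotR xhat z0 : ℂ))‖)
    (hb : ‖u1 + tau1 * Complex.exp (-Complex.I * (k : ℂ) * (dotR xhat z1 : ℂ))‖
        = ‖u2 + tau1 * Complex.exp (-Complex.I * (k : ℂ) * (dotR xhat z1 : ℂ))‖) :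
    u1 = u2 :=
  stmt_13_general tau1 htau k z0 z1 xhat hpi u1 u2 h0 ha hb
end

section
/- Let tau1, tau2, tau3 be complex numbers such that tau2 - tau1 and tau3 - tau1 are linearly independent over the reals, and let w be a nonzero complex number. If u1, u2 are complex numbers satisfying |u1 + tauj * w| = |u2 + tauj * w| for j = 1, 2, 3, then u1 = u2. -/
/-!
Dividing by `w`, the hypotheses say that `x = u₁ / w` and `y = u₂ / w` are equidistant from
`-τ₁, -τ₂, -τ₃`. Expanding `‖x + τ‖² = ‖y + τ‖²` and subtracting the equations for two values of
`τ` shows that `x - y` is orthogonal to `τ₂ - τ₁` and to `τ₃ - τ₁`; these span `ℂ` over `ℝ`, so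
`x = y`.
-/

open Module

section InnerProductSpace

variable {E : Type*} [NormedAddCommGroup E]

theorem inner_sub_sub_eq_zero_of_norm_add_eq_norm_add [InnerProductSpace ℝ E] {x y s t : E}
    (hs : ‖x + s‖ = ‖y + s‖) (ht : ‖x + t‖ = ‖y + t‖) : inner ℝ (t - s) (x - y) = 0 := by
  have hs2 := congrArg (· ^ 2) hs
  have ht2 := congrArg (· ^ 2) ht
  simp only [norm_add_sq_real] at hs2 ht2
  rw [inner_sub_left, inner_sub_right, inner_sub_right, real_inner_comm x s,
    real_inner_comm y s, real_inner_comm x t, real_inner_comm y t]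
  linarith

theorem LinearIndependent.eq_zero_of_forall_inner_eq_zero {𝕜 : Type*} [RCLike 𝕜]
    [InnerProductSpace 𝕜 E] {ι : Type*} [Fintype ι] [Nonempty ι] {v : ι → E}
    (hv : LinearIndependent 𝕜 v) (hcard : Fintype.card ι = finrank 𝕜 E) {z : E}
    (hz : ∀ i, inner 𝕜 (v i) z = 0) : z = 0 :=
  InnerProductSpace.ext_inner_left_basis (basisOfLinearIndependentOfCardEqFinrank hv hcard)
    fun i => by simpa using hz i

end InnerProductSpace

theorem norm_add_mul_eq_norm_add_mul_iff {K : Type*} [NormedField K] {u₁ u₂ w : K} (τ : K)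
    (hw : w ≠ 0) : ‖u₁ + τ * w‖ = ‖u₂ + τ * w‖ ↔ ‖u₁ / w + τ‖ = ‖u₂ / w + τ‖ := by
  have factor (u : K) : u + τ * w = (u / w + τ) * w := by field_simp
  rw [factor u₁, factor u₂, norm_mul, norm_mul, mul_left_inj' (norm_ne_zero_iff.mpr hw)]

/-- Pointwise phase determination with three scattering strengths: if
`τ₂ - τ₁` and `τ₃ - τ₁` are linearly independent over `ℝ` and `w ≠ 0`, then
the three moduli `|u + τⱼ w|` determine `u`. -/
theorem stmt_14 (tau1 tau2 tau3 : ℂ)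
    (htau : LinearIndependent ℝ ![tau2 - tau1, tau3 - tau1])
    (w : ℂ) (hw : w ≠ 0) (u1 u2 : ℂ)
    (h1 : ‖u1 + tau1 * w‖ = ‖u2 + tau1 * w‖)
    (h2 : ‖u1 + tau2 * w‖ = ‖u2 + tau2 * w‖)
    (h3 : ‖u1 + tau3 * w‖ = ‖u2 + tau3 * w‖) :
    u1 = u2 := by
  rw [norm_add_mul_eq_norm_add_mul_iff _ hw] at h1 h2 h3
  have hsub : u1 / w - u2 / w = 0 := by
    refine htau.eq_zero_of_forall_inner_eq_zero (by simp) (Fin.forall_fin_two.mpr ⟨?_, ?_⟩)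
    · exact inner_sub_sub_eq_zero_of_norm_add_eq_norm_add h1 h2
    · exact inner_sub_sub_eq_zero_of_norm_add_eq_norm_add h1 h3
  rwa [sub_eq_zero, div_left_inj' hw] at hsub
end

section
/- Let tau1, tau2, tau3 be complex numbers such that tau2 - tau1 and tau3 - tau1 are linearly independent over the reals, and let M > 0. Then there exists a constant c > 0, depending only on tau1, tau2, tau3 and M, such that for every complex number w with 1/2 <= |w| <= 1, every eps > 0, and all complex numbers u, v with |u| <= M and |v| <= M satisfying | |v + tauj w| - |u + tauj w| | <= eps for j = 1, 2, 3, one has |v - u| <= c * eps. -/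
/-!
Put `z = (v - u) * conj w`. Expanding the moduli, the difference of the squared moduli for
`τⱼ` minus the one for `τ₁` equals `2 ⟪τⱼ - τ₁, z⟫_ℝ`, and each squared difference is at most
`2 (M + ‖τⱼ‖) ε`. So the real inner products of `z` with `τ₂ - τ₁` and `τ₃ - τ₁` are `O(ε)`.
These two vectors span `ℂ` over `ℝ`, and on a finite-dimensional space the injective map
`z ↦ (⟪aᵢ, z⟫)ᵢ` is antilipschitz, so `‖z‖ = O(ε)`; finally `‖v - u‖ ≤ 2 ‖z‖` as `‖w‖ ≥ 1/2`.
-/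

open Submodule Set ComplexConjugate InnerProductSpace

theorem exists_norm_le_of_forall_abs_inner_le {ι E : Type*} [Fintype ι] [NormedAddCommGroup E]
    [InnerProductSpace ℝ E] [FiniteDimensional ℝ E] {a : ι → E}
    (ha : span ℝ (range a) = ⊤) :
    ∃ C > 0, ∀ z : E, ∀ ε, 0 ≤ ε → (∀ i, |⟪a i, z⟫_ℝ| ≤ ε) → ‖z‖ ≤ C * ε := by
  let f : E →ₗ[ℝ] ι → ℝ := LinearMap.pi fun i ↦ (innerSL ℝ (a i) : E →ₗ[ℝ] ℝ)
  have hker : LinearMap.ker f = ⊥ := by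
    refine LinearMap.ker_eq_bot'.mpr fun z hz ↦ ?_
    have hzero : innerₛₗ ℝ z = 0 := LinearMap.ext_on_range ha fun i ↦ by
      simpa [real_inner_comm, f] using congrFun hz i
    exact inner_self_eq_zero.mp (LinearMap.congr_fun hzero z)
  obtain ⟨K, hK, hf⟩ := f.exists_antilipschitzWith hker
  refine ⟨K, hK, fun z ε hε hz ↦ (hf.le_mul_norm (map_zero f) z).trans ?_⟩
  gcongr
  exact (pi_norm_le_iff_of_nonneg hε).mpr fun i ↦ by simpa [f] using hz i

theorem abs_sq_norm_sub_sq_norm_le {E : Type*} [SeminormedAddGroup E] {x y : E} {R ε : ℝ}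
    (hx : ‖x‖ ≤ R) (hy : ‖y‖ ≤ R) (h : |‖x‖ - ‖y‖| ≤ ε) :
    |‖x‖ ^ 2 - ‖y‖ ^ 2| ≤ 2 * R * ε := by
  have hR : 0 ≤ R := (norm_nonneg x).trans hx
  rw [sq_sub_sq, abs_mul, abs_of_nonneg (by positivity)]
  exact mul_le_mul (by linarith) h (abs_nonneg _) (by linarith)

namespace Complex

theorem two_mul_inner_sub_mul_conj (σ τ u v w : ℂ) :
    2 * ⟪σ - τ, (v - u) * conj w⟫_ℝ =
      (‖v + σ * w‖ ^ 2 - ‖u + σ * w‖ ^ 2) - (‖v + τ * w‖ ^ 2 - ‖u + τ * w‖ ^ 2) := by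
  simp only [Complex.inner, Complex.sq_norm, normSq_apply, mul_re, mul_im, add_re, add_im, sub_re,
    sub_im, conj_re, conj_im]
  ring

theorem norm_add_mul_le {u τ w : ℂ} {M T : ℝ} (hu : ‖u‖ ≤ M) (hτ : ‖τ‖ ≤ T) (hw : ‖w‖ ≤ 1) :
    ‖u + τ * w‖ ≤ M + T := by
  grw [norm_add_le, norm_mul, hu, hτ, hw, mul_one]
  exact (norm_nonneg τ).trans hτ

theorem abs_inner_sub_mul_conj_le {σ τ u v w : ℂ} {M T ε : ℝ} (hσ : ‖σ‖ ≤ T) (hτ : ‖τ‖ ≤ T)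
    (hu : ‖u‖ ≤ M) (hv : ‖v‖ ≤ M) (hw : ‖w‖ ≤ 1)
    (hσε : |‖v + σ * w‖ - ‖u + σ * w‖| ≤ ε) (hτε : |‖v + τ * w‖ - ‖u + τ * w‖| ≤ ε) :
    |⟪σ - τ, (v - u) * conj w⟫_ℝ| ≤ 2 * (M + T) * ε := by
  have hσsq := abs_sq_norm_sub_sq_norm_le (norm_add_mul_le hv hσ hw) (norm_add_mul_le hu hσ hw) hσε
  have hτsq := abs_sq_norm_sub_sq_norm_le (norm_add_mul_le hv hτ hw) (norm_add_mul_le hu hτ hw) hτε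
  have h := (abs_sub _ _).trans (add_le_add hσsq hτsq)
  rw [← two_mul_inner_sub_mul_conj, abs_mul, abs_two] at h
  linarith

end Complex

/-- Stability of phase retrieval with three scattering strengths: for
`τ₂ - τ₁, τ₃ - τ₁` linearly independent over `ℝ` and an a priori bound `M`,
there is a constant `c > 0` such that whenever `1/2 ≤ |w| ≤ 1` and the three
moduli `|v + τⱼ w|` differ from `|u + τⱼ w|` by at most `ε`, one has
`|v - u| ≤ c ε`. -/
theorem stmt_15 (tau1 tau2 tau3 : ℂ)
    (htau : LinearIndependent ℝ ![tau2 - tau1, tau3 - tau1])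
    (M : ℝ) (hM : 0 < M) :
    ∃ c : ℝ, 0 < c ∧ ∀ w : ℂ, 1 / 2 ≤ ‖w‖ → ‖w‖ ≤ 1 →
      ∀ eps : ℝ, 0 < eps → ∀ u v : ℂ, ‖u‖ ≤ M → ‖v‖ ≤ M →
        |‖v + tau1 * w‖ - ‖u + tau1 * w‖| ≤ eps →
        |‖v + tau2 * w‖ - ‖u + tau2 * w‖| ≤ eps →
        |‖v + tau3 * w‖ - ‖u + tau3 * w‖| ≤ eps →
        ‖v - u‖ ≤ c * eps := by
  have hspan := htau.span_eq_top_of_card_eq_finrank' (by simp [Complex.finrank_real_complex])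
  obtain ⟨C, hC, hCz⟩ := exists_norm_le_of_forall_abs_inner_le hspan
  set T := ‖tau1‖ + ‖tau2‖ + ‖tau3‖
  have hT : ‖tau1‖ ≤ T ∧ ‖tau2‖ ≤ T ∧ ‖tau3‖ ≤ T := by
    refine ⟨?_, ?_, ?_⟩ <;> linarith [norm_nonneg tau1, norm_nonneg tau2, norm_nonneg tau3]
  refine ⟨4 * C * (M + T), by positivity, fun w hw₁ hw₂ eps heps u v hu hv h₁ h₂ h₃ ↦ ?_⟩
  have hz : ‖(v - u) * conj w‖ ≤ C * (2 * (M + T) * eps) := by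
    refine hCz _ _ (by positivity) (Fin.forall_fin_two.mpr ⟨?_, ?_⟩)
    · exact Complex.abs_inner_sub_mul_conj_le hT.2.1 hT.1 hu hv hw₂ h₂ h₁
    · exact Complex.abs_inner_sub_mul_conj_le hT.2.2 hT.1 hu hv hw₂ h₃ h₁
  rw [norm_mul, Complex.norm_conj] at hz
  nlinarith [norm_nonneg (v - u)]
end

section
/- Let mu > 0, let omega_min < omega_max be real numbers, let tau in C, let q and xhat be unit vectors in R^2, let z0, p in R^2, and let u : [omega_min, omega_max] -> C be continuous. Define H(p') := integral over omega in [omega_min, omega_max] of u(omega) exp( i (omega/sqrt(mu)) (xhat . p') ) d omega, and define K(omega) := ( u(omega) conj(tau) exp( i (omega/sqrt(mu)) (z0 . xhat) ) + conj(u(omega)) tau exp( -i (omega/sqrt(mu)) (z0 . xhat) ) ) (q . xhat_perp). Then integral over omega in [omega_min, omega_max] of K(omega) cos( (omega/sqrt(mu)) (xhat . (p - z0)) ) d omega = U + conj(U), where U := (conj(tau) (q . xhat_perp) / 2) * ( H(p) + H(2 z0 - p) ). -/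
open MeasureTheory

/-!
Write `k = ω/√μ`, `a = x̂ ⋅ p`, `s = z₀ ⋅ x̂` and `w = conj τ (q ⋅ x̂ᵖᵉʳᵖ) u e^{iks}`. Then `K = w + conj w`,
and expanding `cos (k (a - s)) = (e^{ik(a-s)} + e^{-ik(a-s)}) / 2` shows that `K cos (k (a - s))`
is `W + conj W` with `W = conj τ (q ⋅ x̂ᵖᵉʳᵖ) / 2 · u (e^{ika} + e^{ik(2s-a)})`, pointwise in `ω`.
Since `x̂ ⋅ (2 z₀ - p) = 2s - a`, integrating `W` over the frequency band gives `U`, and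
conjugation commutes with the integral.
-/

open ComplexConjugate

theorem dotR_sub_right (x p z : ℝ × ℝ) : dotR x (p - z) = dotR x p - dotR z x := by
  simp only [dotR, Prod.fst_sub, Prod.snd_sub]
  ring

theorem dotR_two_smul_sub_right (x p z : ℝ × ℝ) :
    dotR x ((2 : ℝ) • z - p) = 2 * dotR z x - dotR x p := by
  simp only [dotR, Prod.fst_sub, Prod.snd_sub, Prod.smul_fst, Prod.smul_snd, smul_eq_mul]
  ring

namespace Complex

theorem add_conj_mul_cos (w : ℂ) (θ : ℝ) :
    (w + conj w) * Real.cos θ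
      = (w * exp (θ * I) + w * exp (-θ * I)) / 2
        + conj ((w * exp (θ * I) + w * exp (-θ * I)) / 2) := by
  simp only [map_div₀, map_add, map_mul, map_neg, ← exp_conj, conj_ofReal, conj_I, map_ofNat,
    ofReal_cos, cos]
  ring_nf

theorem add_conj_mul_cos_sub (v τ : ℂ) (k a s c : ℝ) :
    (v * conj τ * exp (I * k * s) + conj v * τ * exp (-I * k * s)) * c * Real.cos (k * (a - s))
      = conj τ * c / 2 * (v * exp (I * k * a) + v * exp (I * k * ((2 * s - a : ℝ) : ℂ)))
        + conj (conj τ * c / 2 *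
            (v * exp (I * k * a) + v * exp (I * k * ((2 * s - a : ℝ) : ℂ)))) := by
  set w := conj τ * c * (v * exp (I * k * s))
  have hw : conj w = τ * c * (conj v * exp (-I * k * s)) := by
    simp only [w, map_mul, conj_conj, conj_ofReal, ← exp_conj, conj_I]
  have hsplit : (w * exp ((k * (a - s) : ℝ) * I) + w * exp (-(k * (a - s) : ℝ) * I)) / 2
      = conj τ * c / 2 * (v * exp (I * k * a) + v * exp (I * k * ((2 * s - a : ℝ) : ℂ))) := by
    simp only [w, mul_assoc, ← exp_add]
    push_cast
    ring_nf
  rw [← hsplit, ← add_conj_mul_cos, hw]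
  ring

end Complex

section RCLike

variable {𝕜 : Type*} [RCLike 𝕜] {f : ℝ → 𝕜} {a b : ℝ} {μ : Measure ℝ}

theorem IntervalIntegrable.conj (hf : IntervalIntegrable f μ a b) :
    IntervalIntegrable (fun x => conj (f x)) μ a b :=
  ⟨(RCLike.conjCLE (K := 𝕜)).toContinuousLinearMap.integrable_comp hf.1,
    (RCLike.conjCLE (K := 𝕜)).toContinuousLinearMap.integrable_comp hf.2⟩

theorem intervalIntegral.integral_add_conj (hf : IntervalIntegrable f μ a b) :
    ∫ x in a..b, (f x + conj (f x)) ∂μ = (∫ x in a..b, f x ∂μ) + conj (∫ x in a..b, f x ∂μ) := by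
  rw [integral_add hf hf.conj, intervalIntegral_conj]

end RCLike

theorem stmt_17_general (μ : ℝ) (ωmin ωmax : ℝ) (hω : ωmin < ωmax) (τ : ℂ)
    (q xhat : ℝ × ℝ)
    (z0 p : ℝ × ℝ) (u : ℝ → ℂ) (hu : ContinuousOn u (Set.Icc ωmin ωmax))
    (H : ℝ × ℝ → ℂ)
    (hH : H = fun p' => ∫ ω in ωmin..ωmax,
        u ω * Complex.exp (Complex.I * ((ω / Real.sqrt μ : ℝ) : ℂ) * (dotR xhat p' : ℂ)))
    (K : ℝ → ℂ)
    (hK : K = fun ω =>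
        (u ω * starRingEnd ℂ τ *
            Complex.exp (Complex.I * ((ω / Real.sqrt μ : ℝ) : ℂ) * (dotR z0 xhat : ℂ))
          + starRingEnd ℂ (u ω) * τ *
            Complex.exp (-Complex.I * ((ω / Real.sqrt μ : ℝ) : ℂ) * (dotR z0 xhat : ℂ)))
        * (dotR q (perp xhat) : ℂ)) :
    ∫ ω in ωmin..ωmax, K ω * (Real.cos ((ω / Real.sqrt μ) * dotR xhat (p - z0)) : ℂ)
      = (starRingEnd ℂ τ * (dotR q (perp xhat) : ℂ) / 2) *
          (H p + H ((2 : ℝ) • z0 - p))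
        + starRingEnd ℂ ((starRingEnd ℂ τ * (dotR q (perp xhat) : ℂ) / 2) *
          (H p + H ((2 : ℝ) • z0 - p))) := by
  subst hH hK
  have plane_wave_integrable (b : ℝ) : IntervalIntegrable
      (fun ω => u ω * Complex.exp (Complex.I * ((ω / Real.sqrt μ : ℝ) : ℂ) * (b : ℂ)))
      volume ωmin ωmax :=
    (hu.mul (Continuous.continuousOn (by fun_prop))).intervalIntegrable_of_Icc hω.le
  simp only [dotR_two_smul_sub_right]
  simp only [dotR_sub_right, Complex.add_conj_mul_cos_sub]
  rw [intervalIntegral.integral_add_conj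
      (((plane_wave_integrable _).add (plane_wave_integrable _)).const_mul _),
    intervalIntegral.integral_const_mul,
    intervalIntegral.integral_add (plane_wave_integrable _) (plane_wave_integrable _)]

/-- Analytical basis of the direct sampling indicator `I^Θ_{z₀,S}(p)` for the
multi-frequency phaseless source problem: the integral over the frequency band
of the phaseless-data combination `K` against the cosine kernel equals
`U + conj U` with `U = (conj τ (q ⋅ x̂ᵖᵉʳᵖ) / 2)(H(p) + H(2 z₀ - p))`, where
`ω/√μ` is the shear wavenumber. -/
theorem stmt_17 (μ : ℝ) (hμ : 0 < μ) (ωmin ωmax : ℝ) (hω : ωmin < ωmax) (τ : ℂ)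
    (q xhat : ℝ × ℝ) (hq : q.1 ^ 2 + q.2 ^ 2 = 1) (hx : xhat.1 ^ 2 + xhat.2 ^ 2 = 1)
    (z0 p : ℝ × ℝ) (u : ℝ → ℂ) (hu : ContinuousOn u (Set.Icc ωmin ωmax))
    (H : ℝ × ℝ → ℂ)
    (hH : H = fun p' => ∫ ω in ωmin..ωmax,
        u ω * Complex.exp (Complex.I * ((ω / Real.sqrt μ : ℝ) : ℂ) * (dotR xhat p' : ℂ)))
    (K : ℝ → ℂ)
    (hK : K = fun ω =>
        (u ω * starRingEnd ℂ τ *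
            Complex.exp (Complex.I * ((ω / Real.sqrt μ : ℝ) : ℂ) * (dotR z0 xhat : ℂ))
          + starRingEnd ℂ (u ω) * τ *
            Complex.exp (-Complex.I * ((ω / Real.sqrt μ : ℝ) : ℂ) * (dotR z0 xhat : ℂ)))
        * (dotR q (perp xhat) : ℂ)) :
    ∫ ω in ωmin..ωmax, K ω * (Real.cos ((ω / Real.sqrt μ) * dotR xhat (p - z0)) : ℂ)
      = (starRingEnd ℂ τ * (dotR q (perp xhat) : ℂ) / 2) *
          (H p + H ((2 : ℝ) • z0 - p))
        + starRingEnd ℂ ((starRingEnd ℂ τ * (dotR q (perp xhat) : ℂ) / 2) *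
          (H p + H ((2 : ℝ) • z0 - p))) :=
  stmt_17_general μ ωmin ωmax hω τ q xhat z0 p u hu H hH K hK
end
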